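/- arXiv:math/0309137 — 2 statements merged into one kernel-verified Lean document; each statement's English description precedes it below -/
import Mathlib

section
/- Fix an integer n ≥ 1. The bijection of the previous parametrization is moreover a homeomorphism: the map ℂ × (ℂⁿ ∖ {0}) → C(ℙ¹, ℙⁿ) sending (z₀, z) to the map of projectivizations induced by the injective linear map (a,b) ↦ (a + z₀·b, z₁·b, …, zₙ·b) is a homeomorphism onto the subspace of C(ℙ¹, ℙⁿ) consisting of all linear maps f : ℙ¹ → ℙⁿ with f([1:0]) = [1:0:⋯:0], where C(ℙ¹, ℙⁿ) carries the compact-open topology. (This is the statement Rat₁(n) ≅ ℂ × (ℂⁿ ∖ {0}).) -/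
/-!
The parametrization `p ↦ f_p` is continuous into `C(ℙ¹, ℙⁿ)` because it is induced by a jointly
continuous family of linear maps, and its image is exactly `Rat₁(n)`: an injective linear map `g`
with `g e₀ ∈ ℂ e₀` is a nonzero multiple of some `L_{z₀,z}`. It is an embedding because already
`p ↦ (f_p [0:1], f_p [1:1]) = ([z₀ : z], [1 + z₀ : z])` is one: near a point with `z_j ≠ 0` the two
lines determine `(z₀, z)` continuously, as the representative `w` of the first line for which
`w + e₀` lies on the second.
-/

open scoped LinearAlgebra.Projectivization ContinuousMap

/-- The projectivization of a topological vector space carries the quotient topology. -/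
instance projectivizationTopology {K V : Type*} [DivisionRing K] [AddCommGroup V] [Module K V]
    [TopologicalSpace V] : TopologicalSpace (Projectivization K V) :=
  instTopologicalSpaceQuotient

/-- The linear map `L_{z₀,z} : ℂ² → ℂ^{n+1}`, `(a, b) ↦ (a + z₀·b, z₁·b, …, zₙ·b)`. -/
noncomputable def ratOneLinearMap (n : ℕ) (z₀ : ℂ) (z : Fin n → ℂ) :
    (Fin 2 → ℂ) →ₗ[ℂ] (Fin (n + 1) → ℂ) :=
  LinearMap.pi (Fin.cases (LinearMap.proj 0 + z₀ • LinearMap.proj 1)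
    (fun j => z j • LinearMap.proj 1))

/-- The basepoint `[1:0:⋯:0]` of `ℙᵐ`. -/
noncomputable def projBasepoint (m : ℕ) : ℙ ℂ (Fin (m + 1) → ℂ) :=
  Projectivization.mk ℂ (Pi.single 0 1) (by
    intro h
    have h0 := congrFun h (0 : Fin (m + 1))
    simp at h0)

open Topology Filter Function

lemma Topology.IsInducing.of_local_leftInverse {X Y Z : Type*} [TopologicalSpace X]
    [TopologicalSpace Y] [TopologicalSpace Z] {ι : X → Z} (hι : IsInducing ι) {f : X → Y}
    (hf : Continuous f)
    (h : ∀ x, ∃ g : Y → Z, ContinuousAt g (f x) ∧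
      ∀ᶠ y in comap f (𝓝 (f x)), g (f y) = ι y) :
    IsInducing f := by
  refine isInducing_iff_nhds.2 fun x => le_antisymm (hf.tendsto x).le_comap ?_
  obtain ⟨g, hg, hgf⟩ := h x
  have hgx : g (f x) = ι x := (eventually_comap.1 hgf).self_of_nhds x rfl
  have hlim : Tendsto (g ∘ f) (comap f (𝓝 (f x))) (𝓝 (ι x)) :=
    hgx ▸ hg.tendsto.comp tendsto_comap
  exact (hι.tendsto_nhds_iff (f := id)).2 (hlim.congr' hgf)

lemma Fin.cons_ne_zero_of_tail_ne_zero {n : ℕ} {α : Type*} [Zero α] {a : α} {z : Fin n → α}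
    (hz : z ≠ 0) : (Fin.cons a z : Fin (n + 1) → α) ≠ 0 :=
  fun h => hz (funext fun j => by simpa using congrFun h j.succ)

namespace Projectivization

section Topology

variable {K V : Type*} [DivisionRing K] [AddCommGroup V] [Module K V] [TopologicalSpace V]

lemma isQuotientMap_mk' : IsQuotientMap (mk' K : {v : V // v ≠ 0} → ℙ K V) :=
  isQuotientMap_quotient_mk'

lemma isOpenMap_mk' [TopologicalSpace K] [ContinuousConstSMul K V] :
    IsOpenMap (mk' K : {v : V // v ≠ 0} → ℙ K V) := by
  intro U hU
  let scale (c : Kˣ) (v : {v : V // v ≠ 0}) : {v : V // v ≠ 0} :=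
    ⟨c • v.1, (smul_ne_zero_iff_ne c).2 v.2⟩
  have hsat : mk' K ⁻¹' (mk' K '' U) = ⋃ c : Kˣ, scale c ⁻¹' U := by
    ext w
    simp only [Set.mem_preimage, Set.mem_image, Set.mem_iUnion]
    constructor
    · rintro ⟨u, hu, huw⟩
      obtain ⟨c, hc⟩ := Quotient.exact' huw
      exact ⟨c, by rwa [show scale c w = u from Subtype.ext hc]⟩
    · rintro ⟨c, hc⟩
      exact ⟨_, hc, Quotient.sound' ⟨c, rfl⟩⟩
  rw [← isQuotientMap_mk'.isOpen_preimage, hsat]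
  exact isOpen_iUnion fun c => hU.preimage
    (((continuous_const_smul (c : K)).comp continuous_subtype_val).subtype_mk _)

lemma isOpenQuotientMap_mk' [TopologicalSpace K] [ContinuousConstSMul K V] :
    IsOpenQuotientMap (mk' K : {v : V // v ≠ 0} → ℙ K V) :=
  ⟨fun x => ⟨⟨x.rep, x.rep_nonzero⟩, mk_rep x⟩, isQuotientMap_mk'.continuous,
    isOpenMap_mk'⟩

variable {W : Type*} [AddCommGroup W] [Module K W] [TopologicalSpace W]

lemma continuous_uncurry_map [TopologicalSpace K] [ContinuousConstSMul K V] {P : Type*}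
    [TopologicalSpace P] (g : P → V →ₗ[K] W) (hg : ∀ p, Injective (g p))
    (hcont : Continuous fun q : P × V => g q.1 q.2) :
    Continuous fun q : P × ℙ K V => map (g q.1) (hg q.1) q.2 := by
  let lift (q : P × {v : V // v ≠ 0}) : {w : W // w ≠ 0} :=
    ⟨g q.1 q.2, fun h => q.2.2 (hg q.1 (by rw [h, map_zero]))⟩
  rw [← (IsOpenQuotientMap.id.prodMap isOpenQuotientMap_mk').continuous_comp_iff]
  have hlift : Continuous lift :=
    (hcont.comp (continuous_fst.prodMk (continuous_subtype_val.comp continuous_snd))).subtype_mk _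
  exact isQuotientMap_mk'.continuous.comp hlift

end Topology

lemma map_smul {K V W : Type*} [Field K] [AddCommGroup V] [Module K V] [AddCommGroup W]
    [Module K W] (g : V →ₗ[K] W) (c : Kˣ) (hcg : Injective ((c : K) • g))
    (hg : Injective g) :
    map ((c : K) • g) hcg = map g hg := by
  funext x
  induction x using ind with
  | h v hv => exact (mk_eq_mk_iff' ..).2 ⟨c, by simp⟩

end Projectivization

section SecantRep

variable {K ι : Type*} [Field K] (i j : ι)

/-- The multiple `w` of `u` whose `i`- and `j`-coordinates, after adding `1` to the `i`-th, are
proportional to those of `v` (junk `0` when `u j * v i = u i * v j`). It depends only on the lines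
`[u]`, `[v]`, and recovers `w` from `[w]` and `[w + Pi.single i 1]` whenever `w j ≠ 0`. -/
def secantRep (u v : ι → K) : ι → K :=
  (v j / (u j * v i - u i * v j)) • u

lemma secantRep_smul_left {c : K} (hc : c ≠ 0) (u v : ι → K) :
    secantRep i j (c • u) v = secantRep i j u v := by
  simp only [secantRep, Pi.smul_apply, smul_eq_mul, smul_smul]
  congr 1
  rw [mul_assoc, mul_assoc, ← mul_sub, div_mul_eq_mul_div, mul_comm c, mul_div_mul_right _ _ hc]

lemma secantRep_smul_right {c : K} (hc : c ≠ 0) (u v : ι → K) :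
    secantRep i j u (c • v) = secantRep i j u v := by
  simp only [secantRep, Pi.smul_apply, smul_eq_mul]
  rw [mul_left_comm, mul_left_comm (u i), ← mul_sub, mul_div_mul_left _ _ hc]

lemma continuousAt_secantRep [TopologicalSpace K] [IsTopologicalDivisionRing K] {u v : ι → K}
    (h : u j * v i - u i * v j ≠ 0) :
    ContinuousAt (fun q : (ι → K) × (ι → K) => secantRep i j q.1 q.2) (u, v) := by
  have hscalar : ContinuousAt
      (fun q : (ι → K) × (ι → K) => q.2 j / (q.1 j * q.2 i - q.1 i * q.2 j)) (u, v) :=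
    ContinuousAt.div (by fun_prop) (by fun_prop) h
  exact hscalar.smul continuous_fst.continuousAt

lemma secantRep_cons_one_add {n : ℕ} (a : K) {z : Fin n → K} {k : Fin n} (hk : z k ≠ 0) :
    secantRep 0 k.succ (Fin.cons a z : Fin (n + 1) → K) (Fin.cons (1 + a) z) = Fin.cons a z := by
  have hscalar : z k / (z k * (1 + a) - a * z k) = 1 := by
    rw [mul_one_add, mul_comm a, add_sub_cancel_right, div_self hk]
  simp [secantRep, hscalar]

noncomputable def projSecantRep (q : ℙ K (ι → K) × ℙ K (ι → K)) : ι → K :=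
  secantRep i j q.1.rep q.2.rep

lemma projSecantRep_mk {u v : ι → K} (hu : u ≠ 0) (hv : v ≠ 0) :
    projSecantRep i j (Projectivization.mk K u hu, Projectivization.mk K v hv) =
      secantRep i j u v := by
  obtain ⟨a, ha⟩ := Projectivization.exists_smul_eq_mk_rep K u hu
  obtain ⟨b, hb⟩ := Projectivization.exists_smul_eq_mk_rep K v hv
  rw [projSecantRep, ← ha, ← hb, Units.smul_def, Units.smul_def,
    secantRep_smul_left i j a.ne_zero, secantRep_smul_right i j b.ne_zero]

lemma continuousAt_projSecantRep [TopologicalSpace K] [IsTopologicalDivisionRing K]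
    {u v : ι → K} (hu : u ≠ 0) (hv : v ≠ 0) (h : u j * v i - u i * v j ≠ 0) :
    ContinuousAt (projSecantRep i j) (Projectivization.mk K u hu, Projectivization.mk K v hv) := by
  have hq := Projectivization.isOpenQuotientMap_mk' (K := K) (V := ι → K)
  let mk₂ :=
    Prod.map (Projectivization.mk' K (V := ι → K)) (Projectivization.mk' K (V := ι → K))
  change ContinuousAt _ (mk₂ (⟨u, hu⟩, ⟨v, hv⟩))
  rw [← (hq.prodMap hq).continuousAt_comp_iff]
  have hcomp : projSecantRep i j ∘ mk₂ =
      (fun q : (ι → K) × (ι → K) => secantRep i j q.1 q.2) ∘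
        Prod.map Subtype.val Subtype.val := by
    funext q
    exact projSecantRep_mk i j q.1.2 q.2.2
  rw [hcomp]
  exact (continuousAt_secantRep i j h).comp (f := Prod.map Subtype.val Subtype.val)
    (continuous_subtype_val.prodMap continuous_subtype_val).continuousAt

end SecantRep

section RatOne

variable {n : ℕ}

/-- `Rat₁(n)`. -/
def ratOne (n : ℕ) : Set C(ℙ ℂ (Fin 2 → ℂ), ℙ ℂ (Fin (n + 1) → ℂ)) :=
  {f | (∃ (g : (Fin 2 → ℂ) →ₗ[ℂ] (Fin (n + 1) → ℂ)) (hg : Function.Injective g),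
      ⇑f = Projectivization.map g hg) ∧ f (projBasepoint 1) = projBasepoint n}

lemma ratOneLinearMap_apply (z₀ : ℂ) (z : Fin n → ℂ) (v : Fin 2 → ℂ) :
    ratOneLinearMap n z₀ z v = Fin.cons (v 0 + z₀ * v 1) fun j => z j * v 1 := by
  ext i
  cases i using Fin.cases <;> simp [ratOneLinearMap]

lemma ratOneLinearMap_injective_iff {z₀ : ℂ} {z : Fin n → ℂ} :
    Injective (ratOneLinearMap n z₀ z) ↔ z ≠ 0 := by
  constructor
  · rintro hinj rfl
    have hker : ratOneLinearMap n z₀ 0 ![-z₀, 1] = 0 := by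
      ext i
      cases i using Fin.cases <;> simp [ratOneLinearMap_apply]
    simpa using hinj (hker.trans (map_zero _).symm)
  · intro hz
    obtain ⟨j, hj : z j ≠ 0⟩ := Function.ne_iff.mp hz
    refine (injective_iff_map_eq_zero _).2 fun v hv => ?_
    have hv1 : v 1 = 0 := by
      simpa [ratOneLinearMap_apply, hj] using congrFun hv j.succ
    have hv0 : v 0 = 0 := by
      simpa [ratOneLinearMap_apply, hv1] using congrFun hv 0
    ext i
    fin_cases i <;> assumption

lemma ratOneLinearMap_single_zero (z₀ : ℂ) (z : Fin n → ℂ) :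
    ratOneLinearMap n z₀ z (Pi.single 0 1) = Pi.single 0 1 := by
  ext i
  cases i using Fin.cases <;> simp [ratOneLinearMap_apply]

lemma exists_eq_smul_ratOneLinearMap (g : (Fin 2 → ℂ) →ₗ[ℂ] (Fin (n + 1) → ℂ))
    {c : ℂ} (hc : c ≠ 0) (hg : g (Pi.single 0 1) = c • Pi.single 0 1) :
    ∃ z₀ z, g = c • ratOneLinearMap n z₀ z := by
  set w := c⁻¹ • g (Pi.single 1 1)
  have hw : ratOneLinearMap n (w 0) (Fin.tail w) (Pi.single 1 1) = w := by
    rw [ratOneLinearMap_apply]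
    simp [Fin.cons_self_tail w]
  refine ⟨w 0, Fin.tail w, (Pi.basisFun ℂ (Fin 2)).ext fun i => ?_⟩
  rw [Pi.basisFun_apply, LinearMap.smul_apply]
  match i with
  | 0 => rw [hg, ratOneLinearMap_single_zero]
  | 1 => rw [hw, smul_inv_smul₀ hc]

variable (n) in
lemma continuous_ratOne_uncurry :
    Continuous fun q : (ℂ × {z : Fin n → ℂ // z ≠ 0}) × ℙ ℂ (Fin 2 → ℂ) =>
      Projectivization.map (ratOneLinearMap n q.1.1 q.1.2.1)
        (ratOneLinearMap_injective_iff.2 q.1.2.2) q.2 := by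
  refine Projectivization.continuous_uncurry_map (K := ℂ) (V := Fin 2 → ℂ)
    (W := Fin (n + 1) → ℂ) (P := ℂ × {z : Fin n → ℂ // z ≠ 0})
    (fun p => ratOneLinearMap n p.1 p.2.1) (fun p => ratOneLinearMap_injective_iff.2 p.2.2) ?_
  have hz : Continuous fun q : (ℂ × {z : Fin n → ℂ // z ≠ 0}) × (Fin 2 → ℂ) =>
      q.1.2.1 :=
    continuous_subtype_val.comp (continuous_snd.comp continuous_fst)
  simp only [ratOneLinearMap_apply]
  exact Continuous.finCons (by fun_prop)
    (continuous_pi fun j => ((continuous_apply j).comp hz).mul (by fun_prop))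

noncomputable def ratOneMap (n : ℕ) (p : ℂ × {z : Fin n → ℂ // z ≠ 0}) :
    C(ℙ ℂ (Fin 2 → ℂ), ℙ ℂ (Fin (n + 1) → ℂ)) :=
  ⟨Projectivization.map (ratOneLinearMap n p.1 p.2.1) (ratOneLinearMap_injective_iff.2 p.2.2),
    (continuous_ratOne_uncurry n).comp (.prodMk_right p) |>.congr fun _ => rfl⟩

lemma continuous_ratOneMap : Continuous (ratOneMap n) :=
  ContinuousMap.continuous_of_continuous_uncurry _ (continuous_ratOne_uncurry n)

lemma ratOneMap_projBasepoint (p : ℂ × {z : Fin n → ℂ // z ≠ 0}) :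
    ratOneMap n p (projBasepoint 1) = projBasepoint n := by
  simp only [ratOneMap, ContinuousMap.coe_mk, projBasepoint, Projectivization.map_mk]
  congr 1
  exact ratOneLinearMap_single_zero _ _

lemma range_ratOneMap : Set.range (ratOneMap n) = ratOne n := by
  ext f
  constructor
  · rintro ⟨p, rfl⟩
    exact ⟨⟨_, ratOneLinearMap_injective_iff.2 p.2.2, rfl⟩, ratOneMap_projBasepoint p⟩
  · rintro ⟨⟨g, hg, hfg⟩, hf⟩
    obtain ⟨c, hc⟩ : ∃ c : ℂˣ, c • Pi.single 0 1 = g (Pi.single 0 1) := by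
      rwa [hfg, projBasepoint, projBasepoint, Projectivization.map_mk,
        Projectivization.mk_eq_mk_iff] at hf
    obtain ⟨z₀, z, rfl⟩ := exists_eq_smul_ratOneLinearMap g c.ne_zero hc.symm
    have hz : z ≠ 0 :=
      ratOneLinearMap_injective_iff (z₀ := z₀).1 fun v w hvw => hg (by simp [hvw])
    refine ⟨(z₀, ⟨z, hz⟩), DFunLike.coe_injective ?_⟩
    rw [hfg]
    exact (Projectivization.map_smul _ c hg (ratOneLinearMap_injective_iff.2 hz)).symm

lemma ratOneMap_mk_zero_one (p : ℂ × {z : Fin n → ℂ // z ≠ 0}) :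
    ratOneMap n p (Projectivization.mk ℂ ![0, 1] (by simp)) =
      Projectivization.mk ℂ (Fin.cons p.1 p.2.1) (Fin.cons_ne_zero_of_tail_ne_zero p.2.2) := by
  simp [ratOneMap, Projectivization.map_mk, ratOneLinearMap_apply]

lemma ratOneMap_mk_one_one (p : ℂ × {z : Fin n → ℂ // z ≠ 0}) :
    ratOneMap n p (Projectivization.mk ℂ ![1, 1] (by simp)) =
      Projectivization.mk ℂ (Fin.cons (1 + p.1) p.2.1)
        (Fin.cons_ne_zero_of_tail_ne_zero p.2.2) := by
  simp [ratOneMap, Projectivization.map_mk, ratOneLinearMap_apply]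

lemma isEmbedding_ratOneMap_evalPair :
    IsEmbedding fun p : ℂ × {z : Fin n → ℂ // z ≠ 0} =>
      (ratOneMap n p (Projectivization.mk ℂ ![0, 1] (by simp)),
        ratOneMap n p (Projectivization.mk ℂ ![1, 1] (by simp))) := by
  have hcons : IsInducing fun p : ℂ × {z : Fin n → ℂ // z ≠ 0} =>
      (Fin.cons p.1 p.2.1 : Fin (n + 1) → ℂ) :=
    (Fin.consEquivL ℂ fun _ => ℂ).toHomeomorph.isInducing.comp
      (IsInducing.id.prodMap IsInducing.subtypeVal)
  have hmap := continuous_ratOneMap (n := n)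
  refine (IsInducing.of_local_leftInverse hcons (by fun_prop) fun p => ?_).isEmbedding
  obtain ⟨j, hj : p.2.1 j ≠ 0⟩ := Function.ne_iff.mp p.2.2
  simp only [ratOneMap_mk_zero_one, ratOneMap_mk_one_one]
  refine ⟨projSecantRep 0 j.succ, ?_, ?_⟩
  · refine continuousAt_projSecantRep 0 j.succ _ _ ?_
    simpa [mul_one_add, mul_comm p.1] using hj
  · let U :=
      Projectivization.mk' ℂ '' {u : {u : Fin (n + 1) → ℂ // u ≠ 0} | u.1 j.succ ≠ 0}
    have hU : IsOpen U := Projectivization.isOpenMap_mk' _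
      (isOpen_ne_fun ((continuous_apply _).comp continuous_subtype_val) continuous_const)
    have hpU : Projectivization.mk ℂ _ (Fin.cons_ne_zero_of_tail_ne_zero p.2.2) ∈ U :=
      ⟨⟨Fin.cons p.1 p.2.1, _⟩, by simpa using hj, rfl⟩
    refine eventually_comap.2 (mem_of_superset
      ((hU.preimage continuous_fst).mem_nhds hpU) ?_)
    rintro _ ⟨⟨u, hu⟩, huj, hu_eq⟩ q rfl
    obtain ⟨a, rfl⟩ := (Projectivization.mk_eq_mk_iff ..).1 hu_eq
    have hqj : q.2.1 j ≠ 0 := by simpa [Units.smul_def] using huj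
    rw [projSecantRep_mk, secantRep_cons_one_add q.1 hqj]

lemma isEmbedding_ratOneMap : IsEmbedding (ratOneMap n) :=
  isEmbedding_ratOneMap_evalPair.of_comp continuous_ratOneMap
    ((continuous_eval_const _).prodMk (continuous_eval_const _))

end RatOne

theorem ratOne_homeomorph_general (n : ℕ) :
    ∃ (hinj : ∀ (z₀ : ℂ) (z : {z : Fin n → ℂ // z ≠ 0}),
        Function.Injective (ratOneLinearMap n z₀ z.1))
      (hcont : ∀ (z₀ : ℂ) (z : {z : Fin n → ℂ // z ≠ 0}),
        Continuous (Projectivization.map (ratOneLinearMap n z₀ z.1) (hinj z₀ z)))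
      (h : (ℂ × {z : Fin n → ℂ // z ≠ 0}) ≃ₜ
        {f : C(ℙ ℂ (Fin 2 → ℂ), ℙ ℂ (Fin (n + 1) → ℂ)) |
          (∃ (g : (Fin 2 → ℂ) →ₗ[ℂ] (Fin (n + 1) → ℂ)) (hg : Function.Injective g),
            ⇑f = Projectivization.map g hg) ∧
          f (projBasepoint 1) = projBasepoint n}),
      ∀ p : ℂ × {z : Fin n → ℂ // z ≠ 0},
        ((h p : C(ℙ ℂ (Fin 2 → ℂ), ℙ ℂ (Fin (n + 1) → ℂ))) : _ → _) =
          Projectivization.map (ratOneLinearMap n p.1 p.2.1) (hinj p.1 p.2) :=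
  ⟨fun _ z => ratOneLinearMap_injective_iff.2 z.2,
    fun z₀ z => (ratOneMap n (z₀, z)).continuous,
    isEmbedding_ratOneMap.toHomeomorph.trans (Homeomorph.setCongr range_ratOneMap),
    fun _ => rfl⟩

/-- `Rat₁(n) ≅ ℂ × (ℂⁿ ∖ {0})`: the map sending `(z₀, z)` to the induced map of
projectivizations of `(a,b) ↦ (a + z₀·b, z₁·b, …, zₙ·b)` is a homeomorphism of
`ℂ × (ℂⁿ ∖ {0})` onto the subspace of `C(ℙ¹, ℙⁿ)` (compact-open topology) consisting of the
linear maps sending `[1:0]` to `[1:0:⋯:0]`. -/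
theorem ratOne_homeomorph (n : ℕ) (hn : 1 ≤ n) :
    ∃ (hinj : ∀ (z₀ : ℂ) (z : {z : Fin n → ℂ // z ≠ 0}),
        Function.Injective (ratOneLinearMap n z₀ z.1))
      (hcont : ∀ (z₀ : ℂ) (z : {z : Fin n → ℂ // z ≠ 0}),
        Continuous (Projectivization.map (ratOneLinearMap n z₀ z.1) (hinj z₀ z)))
      (h : (ℂ × {z : Fin n → ℂ // z ≠ 0}) ≃ₜ
        {f : C(ℙ ℂ (Fin 2 → ℂ), ℙ ℂ (Fin (n + 1) → ℂ)) |
          (∃ (g : (Fin 2 → ℂ) →ₗ[ℂ] (Fin (n + 1) → ℂ)) (hg : Function.Injective g),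
            ⇑f = Projectivization.map g hg) ∧
          f (projBasepoint 1) = projBasepoint n}),
      ∀ p : ℂ × {z : Fin n → ℂ // z ≠ 0},
        ((h p : C(ℙ ℂ (Fin 2 → ℂ), ℙ ℂ (Fin (n + 1) → ℂ))) : _ → _) =
          Projectivization.map (ratOneLinearMap n p.1 p.2.1) (hinj p.1 p.2) :=
  ratOne_homeomorph_general n
end

section
/- Let n ≥ 1 and k ≥ 0 be integers and r > 0 a real number. The map σ : Rat_{k,2r}(n) → Rat_{k,r}(n) sending (g(X), p₁(X), …, pₙ(X)) to (2^{-k}·g(2X), 2^{-k}·p₁(2X), …, 2^{-k}·pₙ(2X)) (i.e. f(z) ↦ f(2z), renormalized so the denominator stays monic) is well defined and continuous, commutes with the U(n)-action, and is a homotopy inverse to the inclusion Rat_{k,r}(n) ⊆ Rat_{k,2r}(n): the composite of σ with the inclusion, in either order, is homotopic to the corresponding identity map. -/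
open Polynomial

/-- The monic denominator `g = X^k + ∑ aᵢ Xⁱ` determined by its lower coefficients. -/
noncomputable def denomPoly (k : ℕ) (a : Fin k → ℂ) : Polynomial ℂ :=
  X ^ k + ∑ i : Fin k, C (a i) * X ^ (i : ℕ)

/-- A numerator `p = ∑ cᵢ Xⁱ` of degree `< k` determined by its coefficients. -/
noncomputable def numerPoly (k : ℕ) (c : Fin k → ℂ) : Polynomial ℂ :=
  ∑ i : Fin k, C (c i) * X ^ (i : ℕ)

/-- `Rat_k(n)` in coefficient coordinates: tuples `(g, p₁, …, pₙ)` with `g` monic of degree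
`k`, `deg pₗ < k`, and no common root. -/
def ratSpace (n k : ℕ) : Set ((Fin k → ℂ) × (Fin n → Fin k → ℂ)) :=
  {x | ¬ ∃ z : ℂ, (denomPoly k x.1).IsRoot z ∧ ∀ l, (numerPoly k (x.2 l)).IsRoot z}

/-- `Rat_{k,r}(n)`: the subspace of `Rat_k(n)` of tuples whose poles (roots of `g`) all have
modulus strictly less than `r`. -/
def ratSpaceLt (n k : ℕ) (r : ℝ) : Set ((Fin k → ℂ) × (Fin n → Fin k → ℂ)) :=
  {x | x ∈ ratSpace n k ∧ ∀ z : ℂ, (denomPoly k x.1).IsRoot z → ‖z‖ < r}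

/-- The map `f(z) ↦ f(2z)` (renormalized so the denominator stays monic) in coefficient
coordinates: each coefficient of `X^i` is multiplied by `2^{i-k}`. -/
noncomputable def ratHalfPoles (n k : ℕ) (x : (Fin k → ℂ) × (Fin n → Fin k → ℂ)) :
    (Fin k → ℂ) × (Fin n → Fin k → ℂ) :=
  (fun i => x.1 i * 2 ^ (i : ℕ) / 2 ^ k, fun l i => x.2 l i * 2 ^ (i : ℕ) / 2 ^ k)

/-- The `U(n)`-action by postcomposition, in coefficient coordinates:
`A · (g, p₁, …, pₙ) = (g, ∑ A₁ₘ pₘ, …, ∑ Aₙₘ pₘ)`. -/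
noncomputable def ratUnitaryAction (n k : ℕ) (A : Matrix.unitaryGroup (Fin n) ℂ)
    (x : (Fin k → ℂ) × (Fin n → Fin k → ℂ)) : (Fin k → ℂ) × (Fin n → Fin k → ℂ) :=
  (x.1, fun l i => ∑ m : Fin n, (A : Matrix (Fin n) (Fin n) ℂ) l m * x.2 m i)

/-!
Substituting `c z` for `z` (and renormalizing by `c⁻ᵏ`) divides every pole by `c` and keeps the
tuple coprime, depends continuously on `c ≠ 0`, and commutes with the `U(n)`-action, which only
mixes numerators. For real `c ≥ 1` it maps each `Rat_{k,R}(n)` into itself, so moving `c` along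
the segment from `2` to `1` is a homotopy from `σ` (on `Rat_{k,R}(n)`, for any `R`) to the identity.
-/

/-- `f(z) ↦ f(c z)`, renormalized so that the denominator stays monic. -/
noncomputable def ratScale (n k : ℕ) (c : ℂ) (x : (Fin k → ℂ) × (Fin n → Fin k → ℂ)) :
    (Fin k → ℂ) × (Fin n → Fin k → ℂ) :=
  (fun i => x.1 i * c ^ (i : ℕ) / c ^ k, fun l i => x.2 l i * c ^ (i : ℕ) / c ^ k)

lemma ratHalfPoles_eq_ratScale (n k : ℕ) : ratHalfPoles n k = ratScale n k 2 := rfl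

@[simp]
lemma ratScale_one (n k : ℕ) : ratScale n k 1 = id := by
  funext x
  simp [ratScale]

lemma eval_denomPoly_scale (k : ℕ) (a : Fin k → ℂ) {c : ℂ} (hc : c ≠ 0) (z : ℂ) :
    (denomPoly k fun i => a i * c ^ (i : ℕ) / c ^ k).eval z
      = (denomPoly k a).eval (c * z) / c ^ k := by
  simp only [denomPoly, eval_add, eval_pow, eval_X, eval_finsetSum, eval_mul, eval_C, mul_pow,
    add_div, Finset.sum_div]
  congr 1
  · field_simp
  · exact Finset.sum_congr rfl fun i _ => by field_simp

lemma eval_numerPoly_scale (k : ℕ) (a : Fin k → ℂ) (c z : ℂ) :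
    (numerPoly k fun i => a i * c ^ (i : ℕ) / c ^ k).eval z
      = (numerPoly k a).eval (c * z) / c ^ k := by
  simp only [numerPoly, eval_finsetSum, eval_mul, eval_C, eval_pow, eval_X, mul_pow,
    Finset.sum_div]
  exact Finset.sum_congr rfl fun i _ => by ring

lemma isRoot_denomPoly_scale_iff {k : ℕ} {a : Fin k → ℂ} {c : ℂ} (hc : c ≠ 0) {z : ℂ} :
    (denomPoly k fun i => a i * c ^ (i : ℕ) / c ^ k).IsRoot z ↔
      (denomPoly k a).IsRoot (c * z) := by
  simp [IsRoot, eval_denomPoly_scale k a hc, hc]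

lemma isRoot_numerPoly_scale_iff {k : ℕ} {a : Fin k → ℂ} {c : ℂ} (hc : c ≠ 0) {z : ℂ} :
    (numerPoly k fun i => a i * c ^ (i : ℕ) / c ^ k).IsRoot z ↔
      (numerPoly k a).IsRoot (c * z) := by
  simp [IsRoot, eval_numerPoly_scale k a c, hc]

lemma ratScale_mem_ratSpaceLt {n k : ℕ} {R R' : ℝ} {c : ℂ} (hc : c ≠ 0)
    (hRR' : ∀ z : ℂ, ‖c * z‖ < R → ‖z‖ < R') {x : (Fin k → ℂ) × (Fin n → Fin k → ℂ)}
    (hx : x ∈ ratSpaceLt n k R) : ratScale n k c x ∈ ratSpaceLt n k R' := by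
  obtain ⟨hcoprime, hpoles⟩ := hx
  refine ⟨fun ⟨z, hg, hp⟩ => hcoprime ⟨c * z, ?_, fun l => ?_⟩, fun z hz => hRR' z ?_⟩
  · exact (isRoot_denomPoly_scale_iff hc).mp hg
  · exact (isRoot_numerPoly_scale_iff hc).mp (hp l)
  · exact hpoles _ ((isRoot_denomPoly_scale_iff hc).mp hz)

lemma ratScale_mem_ratSpaceLt_of_one_le {n k : ℕ} {R c : ℝ} (hc : 1 ≤ c)
    {x : (Fin k → ℂ) × (Fin n → Fin k → ℂ)} (hx : x ∈ ratSpaceLt n k R) :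
    ratScale n k c x ∈ ratSpaceLt n k R := by
  refine ratScale_mem_ratSpaceLt (by exact_mod_cast (by linarith : c ≠ 0)) (fun z hz => ?_) hx
  calc ‖z‖ ≤ c * ‖z‖ := le_mul_of_one_le_left (norm_nonneg z) hc
    _ = ‖(c : ℂ) * z‖ := by rw [norm_mul, Complex.norm_real, Real.norm_of_nonneg (by linarith)]
    _ < R := hz

lemma ratSpaceLt_mono (n k : ℕ) {R R' : ℝ} (h : R ≤ R') : ratSpaceLt n k R ⊆ ratSpaceLt n k R' :=
  fun _ ⟨hx, hpoles⟩ => ⟨hx, fun z hz => (hpoles z hz).trans_le h⟩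

lemma Continuous.ratScale {n k : ℕ} {α : Type*} [TopologicalSpace α] {c : α → ℂ}
    {f : α → (Fin k → ℂ) × (Fin n → Fin k → ℂ)} (hc : Continuous c) (hc0 : ∀ a, c a ≠ 0)
    (hf : Continuous f) : Continuous fun a => ratScale n k (c a) (f a) := by
  unfold _root_.ratScale
  fun_prop (disch := exact fun a => pow_ne_zero _ (hc0 a))

lemma ratScale_ratUnitaryAction (n k : ℕ) (c : ℂ) (A : Matrix.unitaryGroup (Fin n) ℂ)
    (x : (Fin k → ℂ) × (Fin n → Fin k → ℂ)) :
    ratScale n k c (ratUnitaryAction n k A x) = ratUnitaryAction n k A (ratScale n k c x) := by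
  ext l i
  · rfl
  · simp only [ratScale, ratUnitaryAction, Finset.sum_mul, Finset.sum_div, mul_assoc, mul_div_assoc]

lemma homotopic_id_of_eq_ratScale (n k : ℕ) (R : ℝ) {c : ℝ} (hc : 1 ≤ c)
    (f : C(ratSpaceLt n k R, ratSpaceLt n k R)) (hf : ∀ x, (f x : _) = ratScale n k c x) :
    f.Homotopic (ContinuousMap.id _) := by
  have hpath : ∀ t : unitInterval, 1 ≤ (1 - (t : ℝ)) * c + t := fun t => by
    nlinarith [t.2.1, t.2.2]
  refine ⟨{ toFun := fun p => ⟨ratScale n k ((1 - (p.1 : ℝ)) * c + p.1 : ℝ) p.2,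
              ratScale_mem_ratSpaceLt_of_one_le (hpath p.1) p.2.2⟩
            continuous_toFun := ?_
            map_zero_left := fun x => Subtype.ext (by simp [hf])
            map_one_left := fun x => Subtype.ext (by simp) }⟩
  refine (Continuous.ratScale ?_ (fun p => ?_) (by fun_prop)).subtype_mk _
  · fun_prop
  · exact_mod_cast (zero_lt_one.trans_le (hpath p.1)).ne'

theorem ratHalfPoles_homotopy_inverse_general (n k : ℕ) (r : ℝ) (hr : 0 < r) :
    (∀ x ∈ ratSpaceLt n k (2 * r), ratHalfPoles n k x ∈ ratSpaceLt n k r) ∧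
    Continuous (ratHalfPoles n k) ∧
    (∀ (A : Matrix.unitaryGroup (Fin n) ℂ) (x : (Fin k → ℂ) × (Fin n → Fin k → ℂ)),
      ratHalfPoles n k (ratUnitaryAction n k A x) = ratUnitaryAction n k A (ratHalfPoles n k x)) ∧
    ∃ (hsub : ratSpaceLt n k r ⊆ ratSpaceLt n k (2 * r))
      (σ : C(↥(ratSpaceLt n k (2 * r)), ↥(ratSpaceLt n k r))),
      (∀ x : ↥(ratSpaceLt n k (2 * r)), (σ x : (Fin k → ℂ) × (Fin n → Fin k → ℂ)) =
          ratHalfPoles n k ↑x) ∧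
      ContinuousMap.Homotopic
        ((⟨Set.inclusion hsub, continuous_inclusion hsub⟩ :
            C(↥(ratSpaceLt n k r), ↥(ratSpaceLt n k (2 * r)))).comp σ)
        (ContinuousMap.id _) ∧
      ContinuousMap.Homotopic
        (σ.comp (⟨Set.inclusion hsub, continuous_inclusion hsub⟩ :
            C(↥(ratSpaceLt n k r), ↥(ratSpaceLt n k (2 * r)))))
        (ContinuousMap.id _) := by
  rw [ratHalfPoles_eq_ratScale]
  have hmaps : ∀ x ∈ ratSpaceLt n k (2 * r), ratScale n k 2 x ∈ ratSpaceLt n k r :=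
    fun x => ratScale_mem_ratSpaceLt two_ne_zero fun z hz => by
      rw [norm_mul, Complex.norm_two] at hz
      linarith
  have hcont : Continuous (ratScale n k 2) :=
    continuous_const.ratScale (fun _ => two_ne_zero) continuous_id
  refine ⟨hmaps, hcont, ratScale_ratUnitaryAction n k 2, ratSpaceLt_mono n k (by linarith),
    ⟨fun x => ⟨ratScale n k 2 x, hmaps x x.2⟩, (hcont.comp continuous_subtype_val).subtype_mk _⟩,
    fun x => rfl, ?_, ?_⟩
  · exact homotopic_id_of_eq_ratScale n k (2 * r) one_le_two _ fun x => by simp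
  · exact homotopic_id_of_eq_ratScale n k r one_le_two _ fun x => by simp

/-- The map `σ : Rat_{k,2r}(n) → Rat_{k,r}(n)`, `f(z) ↦ f(2z)` (suitably renormalized), is
well defined and continuous, commutes with the `U(n)`-action, and is a homotopy inverse to
the inclusion `Rat_{k,r}(n) ⊆ Rat_{k,2r}(n)`. -/
theorem ratHalfPoles_homotopy_inverse (n k : ℕ) (hn : 1 ≤ n) (r : ℝ) (hr : 0 < r) :
    (∀ x ∈ ratSpaceLt n k (2 * r), ratHalfPoles n k x ∈ ratSpaceLt n k r) ∧
    Continuous (ratHalfPoles n k) ∧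
    (∀ (A : Matrix.unitaryGroup (Fin n) ℂ) (x : (Fin k → ℂ) × (Fin n → Fin k → ℂ)),
      ratHalfPoles n k (ratUnitaryAction n k A x) = ratUnitaryAction n k A (ratHalfPoles n k x)) ∧
    ∃ (hsub : ratSpaceLt n k r ⊆ ratSpaceLt n k (2 * r))
      (σ : C(↥(ratSpaceLt n k (2 * r)), ↥(ratSpaceLt n k r))),
      (∀ x : ↥(ratSpaceLt n k (2 * r)), (σ x : (Fin k → ℂ) × (Fin n → Fin k → ℂ)) =
          ratHalfPoles n k ↑x) ∧
      ContinuousMap.Homotopic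
        ((⟨Set.inclusion hsub, continuous_inclusion hsub⟩ :
            C(↥(ratSpaceLt n k r), ↥(ratSpaceLt n k (2 * r)))).comp σ)
        (ContinuousMap.id _) ∧
      ContinuousMap.Homotopic
        (σ.comp (⟨Set.inclusion hsub, continuous_inclusion hsub⟩ :
            C(↥(ratSpaceLt n k r), ↥(ratSpaceLt n k (2 * r)))))
        (ContinuousMap.id _) :=
  ratHalfPoles_homotopy_inverse_general n k r hr
end
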